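/- For any sequence s of length n, there exist n sequences t¹,…,tⁿ, where tⁱ is obtained from s by a single substitution at position i, such that edit(tⁱ,tʲ) ≥ 2 for all i ≠ j. -/

import Mathlib

/-- The cost structure of Mathlib's former `Mathlib.Data.List.EditDistance.Defs`. -/
structure Levenshtein.Cost (α β δ : Type*) where
  delete : α → δ
  insert : β → δ
  substitute : α → β → δ

/-- Unit costs, as in Mathlib's former `Levenshtein.defaultCost`. -/
def Levenshtein.defaultCost {α : Type*} [DecidableEq α] : Levenshtein.Cost α α ℕ where
  delete _ := 1
  insert _ := 1
  substitute a b := if a = b then 0 else 1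

/-- One step of the dynamic program, as in Mathlib's former `Levenshtein.impl`. -/
def Levenshtein.impl {α β δ : Type*} [AddZeroClass δ] [Min δ] (C : Levenshtein.Cost α β δ)
    (xs : List α) (y : β) (d : {r : List δ // 0 < r.length}) :
    {r : List δ // 0 < r.length} :=
  let ⟨ds, w⟩ := d
  xs.zip (ds.zip ds.tail) |>.foldr
    (init := ⟨[C.insert y + ds.getLast (List.ne_nil_of_length_pos w)], by simp⟩)
    (fun ⟨x, d₀, d₁⟩ ⟨r, w⟩ =>
      ⟨min (C.delete x + r[0]) (min (C.insert y + d₀) (C.substitute x y + d₁)) :: r, by simp⟩)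

/-- Mathlib's former `suffixLevenshtein`. -/
def suffixLevenshtein {α β δ : Type*} [AddZeroClass δ] [Min δ] (C : Levenshtein.Cost α β δ)
    (xs : List α) (ys : List β) : {r : List δ // 0 < r.length} :=
  ys.foldr
    (Levenshtein.impl C xs)
    (xs.foldr (init := ⟨[0], by simp⟩) (fun a ⟨r, w⟩ => ⟨(C.delete a + r[0]) :: r, by simp⟩))

/-- Mathlib's former `levenshtein`. -/
def levenshtein {α β δ : Type*} [AddZeroClass δ] [Min δ] (C : Levenshtein.Cost α β δ)
    (xs : List α) (ys : List β) : δ :=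
  let ⟨r, w⟩ := suffixLevenshtein C xs ys
  r[0]

/-- Edit (Levenshtein) distance between two length-`n` sequences over `α`. -/
def editDist {α : Type*} [DecidableEq α] {n : ℕ} (s t : Fin n → α) : ℕ :=
  levenshtein Levenshtein.defaultCost (List.ofFn s) (List.ofFn t)

/-- `f` is a `(d₁, d₂)`-sensitive bucketing function. -/
def IsSensitive {α B : Type*} [DecidableEq α] {n : ℕ} (d₁ d₂ : ℕ)
    (f : (Fin n → α) → Set B) : Prop :=
  (∀ s t : Fin n → α, editDist s t ≤ d₁ → (f s ∩ f t).Nonempty) ∧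
  (∀ s t : Fin n → α, d₂ ≤ editDist s t → f s ∩ f t = ∅)

/-!
Replace the `i`-th letter of `s` by any other letter. Two of the resulting sequences have the
same length and differ in exactly two positions. In the Levenshtein recursion an insertion or a
deletion leaves a length mismatch, hence costs at least 2 in total, while the substitution
branch either pays for the first letters or recurses; so the distance is at least 2.
-/

namespace Levenshtein

section DefaultCost

variable {α : Type*} [DecidableEq α]

@[simp]
theorem defaultCost_delete (a : α) : (defaultCost : Cost α α ℕ).delete a = 1 :=
  rfl

@[simp]
theorem defaultCost_insert (a : α) : (defaultCost : Cost α α ℕ).insert a = 1 :=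
  rfl

@[simp]
theorem defaultCost_substitute (a b : α) :
    (defaultCost : Cost α α ℕ).substitute a b = if a = b then 0 else 1 :=
  rfl

end DefaultCost

variable {α β δ : Type*} [AddZeroClass δ] [Min δ] (C : Cost α β δ)

theorem impl_length (xs : List α) (y : β) (d : {r : List δ // 0 < r.length})
    (h : d.1.length = xs.length + 1) : (impl C xs y d).1.length = xs.length + 1 := by
  induction xs generalizing d with
  | nil => rfl
  | cons x xs ih =>
    match d, h with
    | ⟨_ :: d₁ :: ds, _⟩, h =>
      exact congrArg (· + 1) (ih ⟨d₁ :: ds, by simp⟩ (by simpa using h))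

theorem impl_cons (x : α) (xs : List α) (y : β) (d : {r : List δ // 0 < r.length})
    (h : 2 ≤ d.1.length) :
    (impl C (x :: xs) y d).1 =
      let r := impl C xs y ⟨d.1.tail, by simp; omega⟩
      min (C.delete x + r.1[0]'r.2) (min (C.insert y + d.1[0]) (C.substitute x y + d.1[1])) ::
        r.1 :=
  match d, h with
  | ⟨_ :: _ :: _, _⟩, _ => rfl

theorem impl_nil (y : β) (d : {r : List δ // 0 < r.length}) :
    (impl C [] y d).1 = [C.insert y + d.1.getLast (List.ne_nil_of_length_pos d.2)] :=
  rfl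

end Levenshtein

open Levenshtein

section

variable {α β δ : Type*} [AddZeroClass δ] [Min δ] (C : Cost α β δ)

theorem suffixLevenshtein_length (xs : List α) (ys : List β) :
    (suffixLevenshtein C xs ys).1.length = xs.length + 1 := by
  induction ys with
  | nil => induction xs with
    | nil => rfl
    | cons _ _ ih => exact congrArg (· + 1) ih
  | cons y ys ih => exact impl_length C xs y _ ih

theorem suffixLevenshtein_cons_right (xs : List α) (y : β) (ys : List β) :
    suffixLevenshtein C xs (y :: ys) = impl C xs y (suffixLevenshtein C xs ys) :=
  rfl

theorem suffixLevenshtein_cons_left (x : α) (xs : List α) (ys : List β) :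
    (suffixLevenshtein C (x :: xs) ys).1 =
      levenshtein C (x :: xs) ys :: (suffixLevenshtein C xs ys).1 := by
  induction ys with
  | nil => rfl
  | cons y ys ih =>
    have h := suffixLevenshtein_length C (x :: xs) ys
    rw [← List.cons_head_tail (List.ne_nil_of_length_pos (suffixLevenshtein C _ _).2)]
    congr 1
    · exact List.head_eq_getElem _
    rw [suffixLevenshtein_cons_right, impl_cons _ _ _ _ _ (by simp [h])]
    simp only [ih]
    rfl

theorem levenshtein_cons_nil (x : α) (xs : List α) :
    levenshtein C (x :: xs) ([] : List β) = C.delete x + levenshtein C xs [] :=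
  rfl

theorem getElem_zero_suffixLevenshtein (xs : List α) (ys : List β) (h) :
    (suffixLevenshtein C xs ys).1[0]'h = levenshtein C xs ys :=
  rfl

theorem levenshtein_nil_cons (y : β) (ys : List β) :
    levenshtein C [] (y :: ys) = C.insert y + levenshtein C [] ys := by
  have h := suffixLevenshtein_length C ([] : List α) ys
  rw [← getElem_zero_suffixLevenshtein C [] (y :: ys) (by simp [suffixLevenshtein_length]),
    ← getElem_zero_suffixLevenshtein C [] ys (by simp [h])]
  simp only [suffixLevenshtein_cons_right, impl_nil, List.getLast_eq_getElem, h]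
  rfl

theorem levenshtein_cons_cons (x : α) (xs : List α) (y : β) (ys : List β) :
    levenshtein C (x :: xs) (y :: ys) =
      min (C.delete x + levenshtein C xs (y :: ys))
        (min (C.insert y + levenshtein C (x :: xs) ys)
          (C.substitute x y + levenshtein C xs ys)) := by
  have h := suffixLevenshtein_length C (x :: xs) ys
  rw [← getElem_zero_suffixLevenshtein C _ (y :: ys) (by simp [suffixLevenshtein_length])]
  simp only [suffixLevenshtein_cons_right,
    impl_cons C x xs y (suffixLevenshtein C (x :: xs) ys) (by simp [h])]
  simp only [suffixLevenshtein_cons_left, List.tail_cons, Subtype.coe_eta, List.getElem_cons_zero,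
    List.getElem_cons_succ, getElem_zero_suffixLevenshtein]
  rfl

end

section DefaultCost

variable {α : Type*} [DecidableEq α]

theorem levenshtein_defaultCost_pos_of_ne {xs ys : List α} (h : xs ≠ ys) :
    0 < levenshtein defaultCost xs ys := by
  induction xs generalizing ys with
  | nil =>
    cases ys with
    | nil => exact absurd rfl h
    | cons y ys => simp [levenshtein_nil_cons]
  | cons x xs ih =>
    cases ys with
    | nil => simp [levenshtein_cons_nil]
    | cons y ys =>
      rw [levenshtein_cons_cons]
      refine lt_min (by simp) (lt_min (by simp) ?_)
      by_cases hxy : x = y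
      · subst hxy
        exact Nat.add_pos_right _ (ih fun h' => h (h' ▸ rfl))
      · simp [hxy]

theorem two_le_levenshtein_defaultCost {xs ys : List α} (hlen : xs.length = ys.length)
    {i j : ℕ} (hij : i ≠ j) (hi : xs[i]? ≠ ys[i]?) (hj : xs[j]? ≠ ys[j]?) :
    2 ≤ levenshtein defaultCost xs ys := by
  induction xs generalizing ys i j with
  | nil =>
    obtain rfl : ys = [] := List.eq_nil_of_length_eq_zero hlen.symm
    simp at hi
  | cons x xs ih =>
    obtain _ | ⟨y, ys⟩ := ys
    · simp at hlen
    have hlen' : xs.length = ys.length := by simpa using hlen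
    have hne_del : xs ≠ y :: ys := fun h => by simp [h] at hlen'
    have hne_ins : x :: xs ≠ ys := fun h => by simp [← h] at hlen'
    rw [levenshtein_cons_cons]
    refine le_min ?_ (le_min ?_ ?_)
    · have := levenshtein_defaultCost_pos_of_ne hne_del
      simp only [defaultCost_delete]
      omega
    · have := levenshtein_defaultCost_pos_of_ne hne_ins
      simp only [defaultCost_insert]
      omega
    by_cases hxy : x = y
    · subst hxy
      obtain _ | i := i
      · simp at hi
      obtain _ | j := j
      · simp at hj
      simpa using ih (i := i) (j := j) hlen' (by omega) (by simpa using hi) (by simpa using hj)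
    · have hne : xs ≠ ys := by
        rintro rfl
        cases i <;> cases j <;> simp_all
      have := levenshtein_defaultCost_pos_of_ne hne
      simp only [defaultCost_substitute, hxy, if_false]
      omega

end DefaultCost

theorem stmt2 {α : Type*} [Fintype α] [DecidableEq α] (hα : 1 < Fintype.card α)
    {n : ℕ} (s : Fin n → α) :
    ∃ t : Fin n → (Fin n → α),
      (∀ i : Fin n, t i i ≠ s i ∧ t i = Function.update s i (t i i)) ∧
      (∀ i j : Fin n, i ≠ j → 2 ≤ editDist (t i) (t j)) := by
  choose other h_other using Fintype.exists_ne_of_one_lt_card hα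
  refine ⟨fun i => Function.update s i (other (s i)), fun i => by simp [h_other],
    fun i j hij => ?_⟩
  have hij' : (i : ℕ) ≠ j := Fin.val_ne_of_ne hij
  refine two_le_levenshtein_defaultCost (by simp) hij' ?_ ?_
  · simp [Function.update_of_ne hij, h_other]
  · simp [Function.update_of_ne hij.symm, (h_other _).symm]
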